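/- Let n = ∑_{i=1}^{s} ∑_{k=l_i}^{t_i} 2^k where t_1 ≥ l_1 > l_1 - 2 ≥ t_2 ≥ l_2 > ... ≥ t_s ≥ l_s ≥ 0. Then for each i = 1,...,s and every x ∈ E_{t_i} := I_{t_i+1}(e_{t_i+1} + e_{t_i+2}), one has n·|K_n(x)| ≥ 2^{2 t_i - 2}. -/

import Mathlib

open MeasureTheory Finset

noncomputable section

/-- The dyadic group: countable product of `ZMod 2`. -/
abbrev G := ℕ → ZMod 2

instance : MeasurableSpace (ZMod 2) := ⊤

/-- Walsh–Paley function `w n`. -/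
def walsh (n : ℕ) (x : G) : ℝ :=
  ∏ k ∈ Finset.range (n + 1), if n.testBit k then (-1 : ℝ) ^ (x k).val else 1

/-- Walsh–Dirichlet kernel `D n = ∑_{k<n} w k`. -/
def Dker (n : ℕ) (x : G) : ℝ := ∑ k ∈ Finset.range n, walsh k x

/-- Walsh–Fejér kernel `K n = (1/n) ∑_{k=1}^n D k`. -/
def Kker (n : ℕ) (x : G) : ℝ := (1 / (n : ℝ)) * ∑ k ∈ Finset.range n, Dker (k + 1) x

/-- Dyadic cylinder `I_n(y)`: points agreeing with `y` in the first `n` coordinates. -/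
def cyl (n : ℕ) (y : G) : Set G := {x | ∀ j < n, x j = y j}

/-- `I_n = I_n(0)`. -/
def Iset (n : ℕ) : Set G := cyl n 0

/-- The generator `e t`, with a single `1` in coordinate `t`. -/
def e (t : ℕ) : G := fun j => if j = t then 1 else 0

/- ### Auxiliary material -/

lemma zmod_val_one_of_ne (a : ZMod 2) (h : a ≠ 0) : a.val = 1 := by
  have h1 : a.val < 2 := a.val_lt
  have h2 : a.val ≠ 0 := fun hv => h ((ZMod.val_eq_zero a).mp hv)
  omega

/-- Walsh function as a product over an arbitrary sufficiently long range. -/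
def wP (B n : ℕ) (x : G) : ℝ :=
  ∏ k ∈ Finset.range B, if n.testBit k then (-1 : ℝ) ^ (x k).val else 1

lemma wP_succ (B n : ℕ) (x : G) (h : n < 2 ^ B) : wP (B + 1) n x = wP B n x := by
  rw [wP, Finset.prod_range_succ, Nat.testBit_lt_two_pow h, wP]
  simp

lemma wP_eq_of_le (B B' n : ℕ) (x : G) (hB : B ≤ B') (h : n < 2 ^ B) :
    wP B' n x = wP B n x := by
  induction B', hB using Nat.le_induction with
  | base => rfl
  | succ B' hBB ih =>
      rw [wP_succ _ _ _ (lt_of_lt_of_le h (Nat.pow_le_pow_right (by norm_num) hBB)), ih]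

lemma walsh_eq_wP (B n : ℕ) (x : G) (h : n < 2 ^ B) : walsh n x = wP B n x := by
  have h1 : walsh n x = wP (n + 1) n x := rfl
  rcases le_total B (n + 1) with hc | hc
  · rw [h1, wP_eq_of_le B (n + 1) n x hc h]
  · rw [h1, ← wP_eq_of_le (n + 1) B n x hc (lt_trans (Nat.lt_two_pow_self (n := n)) (Nat.pow_lt_pow_right (by norm_num) (Nat.lt_succ_self n)))]

lemma walsh_zero' (x : G) : walsh 0 x = 1 := by
  simp [walsh]

lemma walsh_two_pow (b : ℕ) (x : G) : walsh (2 ^ b) x = (-1 : ℝ) ^ (x b).val := by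
  rw [walsh_eq_wP (b + 1) _ x (Nat.pow_lt_pow_right (by norm_num) (Nat.lt_succ_self b)), wP]
  rw [Finset.prod_eq_single b]
  · simp [Nat.testBit_two_pow_self]
  · intro k _ hk
    simp [Nat.testBit_two_pow_of_ne (Ne.symm hk)]
  · intro hb
    exact absurd (Finset.self_mem_range_succ b) hb

lemma walsh_two_pow_add (b j : ℕ) (x : G) (hj : j < 2 ^ b) :
    walsh (2 ^ b + j) x = (-1 : ℝ) ^ (x b).val * walsh j x := by
  have h2 : (2:ℕ) ^ b < 2 ^ (b + 1) := Nat.pow_lt_pow_right (by norm_num) (Nat.lt_succ_self b)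
  have h1 : 2 ^ b + j < 2 ^ (b + 1) := by
    have : (2:ℕ) ^ (b+1) = 2 ^ b + 2 ^ b := by ring
    omega
  rw [walsh_eq_wP (b + 1) _ x h1, walsh_eq_wP (b + 1) j x (lt_trans hj h2), wP, wP]
  rw [show ((-1:ℝ) ^ (x b).val * ∏ k ∈ Finset.range (b+1), if j.testBit k then (-1 : ℝ) ^ (x k).val else 1) = ∏ k ∈ Finset.range (b+1), (if (2^b).testBit k then (-1 : ℝ) ^ (x k).val else 1) * (if j.testBit k then (-1 : ℝ) ^ (x k).val else 1) by
    rw [Finset.prod_mul_distrib]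
    congr 1
    rw [← wP, ← walsh_eq_wP (b+1) _ x h2, walsh_two_pow]]
  apply Finset.prod_congr rfl
  intro k hk
  rcases lt_trichotomy k b with hkb | hkb | hkb
  · rw [Nat.testBit_two_pow_add_gt hkb, Nat.testBit_two_pow_of_ne (by omega : b ≠ k)]
    rcases Bool.eq_false_or_eq_true (j.testBit k) with h | h <;> simp [h]
  · subst hkb
    rw [Nat.testBit_two_pow_add_eq, Nat.testBit_lt_two_pow hj]
    simp
  · simp at hk
    omega

lemma walsh_eq_one (b k : ℕ) (x : G) (hb : ∀ j < b, x j = 0) (hk : k < 2 ^ b) :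
    walsh k x = 1 := by
  rw [walsh_eq_wP b k x hk, wP]
  apply Finset.prod_eq_one
  intro j hj
  simp only [Finset.mem_range] at hj
  rw [hb j hj]
  simp
/- ### Dirichlet kernel values -/

lemma Dker_two_pow_add (b m : ℕ) (x : G) (hm : m ≤ 2 ^ b) :
    Dker (2 ^ b + m) x = Dker (2 ^ b) x + (-1 : ℝ) ^ (x b).val * Dker m x := by
  rw [Dker, Finset.sum_range_add, Dker, Dker, Finset.mul_sum]
  congr 1
  apply Finset.sum_congr rfl
  intro j hj
  simp only [Finset.mem_range] at hj
  exact walsh_two_pow_add b j x (lt_of_lt_of_le hj hm)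

lemma Dker_two_pow_of_zero (b : ℕ) (x : G) (hb : ∀ j < b, x j = 0) :
    Dker (2 ^ b) x = 2 ^ b := by
  induction b with
  | zero => simp [Dker, walsh_zero']
  | succ b ih =>
      have hb' : ∀ j < b, x j = 0 := fun j hj => hb j (by omega)
      have hxb : x b = 0 := hb b (by omega)
      have : (2:ℕ) ^ (b + 1) = 2 ^ b + 2 ^ b := by ring
      rw [this, Dker_two_pow_add b (2 ^ b) x le_rfl, ih hb', hxb]
      push_cast
      simp
      ring

lemma Dker_two_pow_of_ne (b j : ℕ) (x : G) (hj : x j ≠ 0) (hjb : j < b) :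
    Dker (2 ^ b) x = 0 := by
  induction b, hjb using Nat.le_induction with
  | base =>
      have : (2:ℕ) ^ (j + 1) = 2 ^ j + 2 ^ j := by ring
      rw [this, Dker_two_pow_add j (2 ^ j) x le_rfl, zmod_val_one_of_ne _ hj]
      ring
  | succ b hjb ih =>
      have : (2:ℕ) ^ (b + 1) = 2 ^ b + 2 ^ b := by ring
      rw [this, Dker_two_pow_add b (2 ^ b) x le_rfl, ih]
      ring

/- ### The function `G n x = ∑_{k<n} (n-k) w_k x = n K_n x` -/

noncomputable def Gsum (n : ℕ) (x : G) : ℝ :=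
  ∑ k ∈ Finset.range n, ((n : ℝ) - (k : ℝ)) * walsh k x

lemma Gsum_two_pow_add (b m : ℕ) (x : G) (hm : m ≤ 2 ^ b) :
    Gsum (2 ^ b + m) x
      = Gsum (2 ^ b) x + (m : ℝ) * Dker (2 ^ b) x + (-1 : ℝ) ^ (x b).val * Gsum m x := by
  rw [Gsum, Finset.sum_range_add]
  have h1 : ∑ k ∈ Finset.range (2 ^ b), ((((2:ℕ) ^ b + m : ℕ) : ℝ) - k) * walsh k x
      = Gsum (2 ^ b) x + (m : ℝ) * Dker (2 ^ b) x := by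
    rw [Gsum, Dker, Finset.mul_sum, ← Finset.sum_add_distrib]
    apply Finset.sum_congr rfl
    intro k _
    push_cast
    ring
  have h2 : ∑ j ∈ Finset.range m, ((((2:ℕ) ^ b + m : ℕ) : ℝ) - ((2 ^ b + j : ℕ) : ℝ)) * walsh (2 ^ b + j) x
      = (-1 : ℝ) ^ (x b).val * Gsum m x := by
    rw [Gsum, Finset.mul_sum]
    apply Finset.sum_congr rfl
    intro j hj
    simp only [Finset.mem_range] at hj
    rw [walsh_two_pow_add b j x (lt_of_lt_of_le hj hm)]
    push_cast
    ring
  rw [h1, h2]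

lemma sum_range_cast (n : ℕ) : (∑ k ∈ Finset.range n, (k : ℝ)) = n * (n - 1) / 2 := by
  induction n with
  | zero => simp
  | succ n ih => rw [Finset.sum_range_succ, ih]; push_cast; ring

lemma Gsum_of_zero (b n : ℕ) (x : G) (hb : ∀ j < b, x j = 0) (hn : n ≤ 2 ^ b) :
    Gsum n x = n * (n + 1) / 2 := by
  have : Gsum n x = ∑ k ∈ Finset.range n, ((n : ℝ) - k) := by
    rw [Gsum]
    apply Finset.sum_congr rfl
    intro k hk
    simp only [Finset.mem_range] at hk
    rw [walsh_eq_one b k x hb (lt_of_lt_of_le hk hn), mul_one]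
  rw [this, Finset.sum_sub_distrib, Finset.sum_const, Finset.card_range, sum_range_cast]
  push_cast
  ring

lemma Gsum_two_pow_single (b z : ℕ) (x : G) (hz1 : x z ≠ 0)
    (h : ∀ j < b, j ≠ z → x j = 0) (hzb : z < b) :
    Gsum (2 ^ b) x = (2 : ℝ) ^ (z + b) / 2 := by
  induction b, hzb using Nat.le_induction with
  | base =>
      have hzero : ∀ j < z, x j = 0 := fun j hj => h j (by omega) (by omega)
      have h2 : (2:ℕ) ^ (z + 1) = 2 ^ z + 2 ^ z := by ring
      show Gsum (2 ^ (z+1)) x = (2:ℝ) ^ (z + (z+1)) / 2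
      rw [h2, Gsum_two_pow_add z (2 ^ z) x le_rfl, zmod_val_one_of_ne _ hz1,
        Gsum_of_zero z (2 ^ z) x hzero le_rfl, Dker_two_pow_of_zero z x hzero]
      push_cast
      rw [pow_add, pow_succ]
      ring
  | succ b hzb ih =>
      have h' : ∀ j < b, j ≠ z → x j = 0 := fun j hj => h j (by omega)
      have hxb : x b = 0 := h b (by omega) (by omega)
      have h2 : (2:ℕ) ^ (b + 1) = 2 ^ b + 2 ^ b := by ring
      rw [h2, Gsum_two_pow_add b (2 ^ b) x le_rfl, ih h',
        Dker_two_pow_of_ne b z x hz1 hzb, hxb]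
      simp only [ZMod.val_zero, pow_zero]
      rw [pow_add, pow_add, pow_succ]
      ring

lemma Gsum_two_pow_double (b z w : ℕ) (x : G) (hz : x z ≠ 0) (hw : x w ≠ 0)
    (hzw : z < w) (hwb : w < b) : Gsum (2 ^ b) x = 0 := by
  induction b, hwb using Nat.le_induction with
  | base =>
      have : (2:ℕ) ^ (w + 1) = 2 ^ w + 2 ^ w := by ring
      rw [this, Gsum_two_pow_add w (2 ^ w) x le_rfl, zmod_val_one_of_ne _ hw,
        Dker_two_pow_of_ne w z x hz hzw]
      ring
  | succ b hwb ih =>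
      have : (2:ℕ) ^ (b + 1) = 2 ^ b + 2 ^ b := by ring
      rw [this, Gsum_two_pow_add b (2 ^ b) x le_rfl, ih,
        Dker_two_pow_of_ne b z x hz (by omega)]
      ring
/- ### The comparison functions γ and β -/

noncomputable def gam (z r : ℕ) : ℝ :=
  (r : ℝ) * (r + 1) / 2 - (if 2 ^ z ≤ r then ((r : ℝ) - 2 ^ z) * ((r : ℝ) - 2 ^ z + 1) else 0)

noncomputable def bet (z r : ℕ) : ℝ :=
  if r < 2 ^ z then (r : ℝ) * (r + 1) / 2
  else ((2 : ℝ) ^ (z + 1) - r) * ((2 : ℝ) ^ (z + 1) - 1 - r) / 2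

lemma gam_of_le (z r : ℕ) (h : r ≤ 2 ^ z) : gam z r = (r : ℝ) * (r + 1) / 2 := by
  rw [gam]
  rcases lt_or_eq_of_le h with h' | h'
  · rw [if_neg (by omega)]; ring
  · subst h'
    rw [if_pos le_rfl]
    simp

lemma bet_nonneg (z r : ℕ) (hr : r < 2 ^ (z + 1)) : 0 ≤ bet z r := by
  rw [bet]
  split_ifs with h
  · positivity
  · have h1 : (r : ℝ) ≤ (2 : ℝ) ^ (z + 1) - 1 := by
      have : (r : ℝ) + 1 ≤ ((2 ^ (z + 1) : ℕ) : ℝ) := by exact_mod_cast hr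
      push_cast at this
      linarith
    nlinarith [h1]

lemma gam_ge_bet (z r : ℕ) (hr : r < 2 ^ (z + 1)) : bet z r ≤ gam z r := by
  by_cases h : r < 2 ^ z
  · rw [bet, if_pos h, gam_of_le z r h.le]
  · push_neg at h
    rw [bet, if_neg (by omega), gam, if_pos h]
    have hA1 : ((2 : ℕ) ^ z : ℝ) ≤ (r : ℝ) := by exact_mod_cast h
    have hA2 : (r : ℝ) ≤ 2 * (2 : ℝ) ^ z - 1 := by
      have : (r : ℝ) + 1 ≤ ((2 ^ (z + 1) : ℕ) : ℝ) := by exact_mod_cast hr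
      push_cast [pow_succ] at this
      linarith
    push_cast at hA1
    rw [pow_succ]
    nlinarith [hA1, hA2]

lemma key_ineq (z r : ℕ) (hr : r < 2 ^ (z + 1)) :
    bet z r ≤ (2 : ℝ) ^ z * (2 : ℝ) ^ z - gam z r := by
  by_cases h : r < 2 ^ z
  · rw [bet, if_pos h, gam_of_le z r h.le]
    have h1 : (r : ℝ) + 1 ≤ (2 : ℝ) ^ z := by
      have : (r : ℝ) + 1 ≤ ((2 ^ z : ℕ) : ℝ) := by exact_mod_cast h
      push_cast at this
      linarith
    have h0 : (0:ℝ) ≤ r := Nat.cast_nonneg r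
    nlinarith [h1, h0]
  · push_neg at h
    rw [bet, if_neg (by omega), gam, if_pos h]
    have hA1 : ((2:ℝ) ^ z) ≤ (r : ℝ) := by exact_mod_cast h
    have hA2 : (r : ℝ) ≤ 2 * (2 : ℝ) ^ z - 1 := by
      have : (r : ℝ) + 1 ≤ ((2 ^ (z + 1) : ℕ) : ℝ) := by exact_mod_cast hr
      push_cast [pow_succ] at this
      linarith
    rw [pow_succ]
    nlinarith [hA1, hA2]

/- ### The master lemma -/

lemma master (x : G) (z : ℕ) (hz1 : x z ≠ 0) (hz0 : ∀ j < z, x j = 0) (n : ℕ) :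
    ((∀ j, z < j → 2 ^ j ≤ n → x j = 0) →
      Gsum n x = (2 : ℝ) ^ z / 2 * ((n : ℝ) - ((n % 2 ^ (z + 1) : ℕ) : ℝ))
        + gam z (n % 2 ^ (z + 1)))
    ∧ bet z (n % 2 ^ (z + 1)) ≤ |Gsum n x| := by
  induction n using Nat.strong_induction_on with
  | _ n IH =>
  have hpow : (0:ℕ) < 2 ^ (z + 1) := Nat.pow_pos (by norm_num)
  have hzz : (2:ℕ) ^ z < 2 ^ (z + 1) := Nat.pow_lt_pow_right (by norm_num) (Nat.lt_succ_self z)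
  rcases le_or_gt n (2 ^ z) with h1 | h1
  · -- n ≤ 2^z
    have hr : n % 2 ^ (z + 1) = n := Nat.mod_eq_of_lt (by omega)
    have hG : Gsum n x = (n : ℝ) * (n + 1) / 2 := Gsum_of_zero z n x hz0 h1
    constructor
    · intro _
      rw [hr, hG, gam_of_le z n h1]
      ring
    · rw [hr, hG]
      have hb : bet z n ≤ (n : ℝ) * (n + 1) / 2 := by
        rw [bet]
        split_ifs with h
        · exact le_rfl
        · -- n = 2^z
          have hn2 : n = 2 ^ z := by omega
          subst hn2
          have hc : ((2 ^ z : ℕ) : ℝ) = (2:ℝ) ^ z := by push_cast; ring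
          rw [hc, pow_succ]
          nlinarith [pow_pos (show (0:ℝ) < 2 by norm_num) z]
      have hnn : (0:ℝ) ≤ (n : ℝ) * (n + 1) / 2 := by positivity
      calc bet z n ≤ (n : ℝ) * (n + 1) / 2 := hb
        _ ≤ |(n : ℝ) * (n + 1) / 2| := le_abs_self _
  · rcases lt_or_ge n (2 ^ (z + 1)) with h2 | h2
    · -- 2^z < n < 2^(z+1)
      set m := n - 2 ^ z with hm
      have hnm : n = 2 ^ z + m := by omega
      have hmz : m < 2 ^ z := by omega
      have hr : n % 2 ^ (z + 1) = n := Nat.mod_eq_of_lt h2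
      have hG : Gsum n x = ((2:ℝ) ^ z) * ((2:ℝ) ^ z + 1) / 2 + (m : ℝ) * (2:ℝ) ^ z
          - (m : ℝ) * ((m : ℝ) + 1) / 2 := by
        rw [hnm, Gsum_two_pow_add z m x hmz.le, zmod_val_one_of_ne _ hz1,
          Gsum_of_zero z (2 ^ z) x hz0 le_rfl, Gsum_of_zero z m x hz0 hmz.le,
          Dker_two_pow_of_zero z x hz0]
        push_cast
        ring
      have hcast : (n : ℝ) = (2:ℝ) ^ z + (m : ℝ) := by rw [hnm]; push_cast; ring
      have hmR : (m : ℝ) + 1 ≤ (2:ℝ) ^ z := by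
        have : (m : ℝ) + 1 ≤ ((2 ^ z : ℕ) : ℝ) := by exact_mod_cast hmz
        push_cast at this; linarith
      have hm0 : (0:ℝ) ≤ (m : ℝ) := Nat.cast_nonneg m
      constructor
      · intro _
        rw [hr, hG, gam, if_pos (by omega : 2 ^ z ≤ n), hcast]
        push_cast
        ring
      · rw [hr, hG, bet, if_neg (by omega)]
        have hge : ((2:ℝ) ^ (z+1) - n) * ((2:ℝ) ^ (z+1) - 1 - n) / 2
            ≤ ((2:ℝ) ^ z) * ((2:ℝ) ^ z + 1) / 2 + (m : ℝ) * (2:ℝ) ^ z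
              - (m : ℝ) * ((m : ℝ) + 1) / 2 := by
          rw [hcast, pow_succ]
          nlinarith [hmR, hm0]
        have hnn : (0:ℝ) ≤ ((2:ℝ) ^ (z+1) - n) * ((2:ℝ) ^ (z+1) - 1 - n) / 2 := by
          have h1' : (n : ℝ) ≤ (2:ℝ) ^ (z+1) - 1 := by
            have : (n : ℝ) + 1 ≤ ((2 ^ (z+1) : ℕ) : ℝ) := by exact_mod_cast h2
            push_cast at this; linarith
          nlinarith [h1']
        calc ((2:ℝ) ^ (z+1) - n) * ((2:ℝ) ^ (z+1) - 1 - n) / 2 ≤ _ := hge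
          _ ≤ |_| := le_abs_self _
    · -- n ≥ 2^(z+1)
      have hn0 : n ≠ 0 := by omega
      set b := Nat.log 2 n with hb
      have hbl : 2 ^ b ≤ n := Nat.pow_log_le_self 2 hn0
      have hbu : n < 2 ^ (b + 1) := Nat.lt_pow_succ_log_self (by norm_num) n
      have hzb : z + 1 ≤ b := by
        have : (2:ℕ) ^ (z + 1) < 2 ^ (b + 1) := lt_of_le_of_lt h2 hbu
        have := (Nat.pow_lt_pow_iff_right (by norm_num : 1 < 2)).mp this
        omega
      set m := n - 2 ^ b with hm
      have hnm : n = 2 ^ b + m := by omega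
      have hmb : m < 2 ^ b := by
        have : (2:ℕ) ^ (b+1) = 2 ^ b + 2 ^ b := by ring
        omega
      have hdvd : (2:ℕ) ^ (z + 1) ∣ 2 ^ b := pow_dvd_pow 2 hzb
      have hrm : m % 2 ^ (z + 1) = n % 2 ^ (z + 1) := by
        obtain ⟨c, hc⟩ := hdvd
        rw [hnm, hc, Nat.mul_add_mod]
      set r := n % 2 ^ (z + 1) with hrdef
      have hrlt : r < 2 ^ (z + 1) := Nat.mod_lt _ hpow
      have IHm := IH m (by omega)
      rw [hrm] at IHm
      have hDb : Dker (2 ^ b) x = 0 := Dker_two_pow_of_ne b z x hz1 (by omega)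
      by_cases hmid : ∃ j, z < j ∧ j < b ∧ x j ≠ 0
      · obtain ⟨w, hw1, hw2, hw3⟩ := hmid
        have hG2 : Gsum (2 ^ b) x = 0 := Gsum_two_pow_double b z w x hz1 hw3 hw1 hw2
        have hGn : Gsum n x = (-1 : ℝ) ^ (x b).val * Gsum m x := by
          rw [hnm, Gsum_two_pow_add b m x hmb.le, hG2, hDb]
          ring
        constructor
        · intro hCA
          exact absurd (hCA w hw1 (le_trans (Nat.pow_le_pow_right (by norm_num) hw2.le)
            (by omega : 2 ^ b ≤ n))) hw3
        · rw [hGn, abs_mul, abs_pow, abs_neg, abs_one, one_pow, one_mul]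
          exact IHm.2
      · push_neg at hmid
        have hCAm : ∀ j, z < j → 2 ^ j ≤ m → x j = 0 := by
          intro j hj hjm
          apply hmid j hj
          by_contra hc
          push_neg at hc
          exact absurd (le_trans (Nat.pow_le_pow_right (by norm_num) hc) hjm) (by omega)
        have hGm := IHm.1 hCAm
        have hG2 : Gsum (2 ^ b) x = (2:ℝ) ^ (z + b) / 2 := by
          apply Gsum_two_pow_single b z x hz1 _ (by omega)
          intro j hj hjz
          rcases lt_trichotomy j z with h' | h' | h'
          · exact hz0 j h'
          · exact absurd h' hjz
          · exact hmid j h' hj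
        have hrec : Gsum n x = (2:ℝ) ^ (z + b) / 2 + (m : ℝ) * 0
            + (-1 : ℝ) ^ (x b).val * Gsum m x := by
          rw [hnm, Gsum_two_pow_add b m x hmb.le, hG2, hDb]
        have hrmn : (r:ℕ) ≤ m := hrm ▸ Nat.mod_le m (2 ^ (z+1))
        have hcastn : (n : ℝ) = (2:ℝ) ^ b + (m : ℝ) := by rw [hnm]; push_cast; ring
        have hpowzb : (2:ℝ) ^ (z + b) = (2:ℝ) ^ z * (2:ℝ) ^ b := pow_add 2 z b
        by_cases hxb : x b = 0
        · have hsign : ((-1 : ℝ)) ^ (x b).val = 1 := by rw [hxb]; simp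
          have hform : Gsum n x = (2 : ℝ) ^ z / 2 * ((n : ℝ) - (r : ℝ)) + gam z r := by
            rw [hrec, hsign, one_mul, hGm, hcastn, hpowzb]
            ring
          constructor
          · intro _; exact hform
          · rw [hform]
            have h1' : (0:ℝ) ≤ (n : ℝ) - (r : ℝ) := by
              have : (r:ℕ) ≤ n := Nat.mod_le n _
              have := Nat.cast_le (α := ℝ).mpr this
              linarith
            have h2' : bet z r ≤ gam z r := gam_ge_bet z r hrlt
            have h3' : (0:ℝ) ≤ (2 : ℝ) ^ z / 2 * ((n : ℝ) - (r : ℝ)) := by positivity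
            calc bet z r ≤ (2 : ℝ) ^ z / 2 * ((n : ℝ) - (r : ℝ)) + gam z r := by linarith
              _ ≤ |_| := le_abs_self _
        · have hsign : ((-1 : ℝ)) ^ (x b).val = -1 := by
            rw [zmod_val_one_of_ne _ hxb]; simp
          constructor
          · intro hCA
            exact absurd (hCA b (by omega) (by omega)) hxb
          · have hG : Gsum n x = (2:ℝ) ^ z / 2 * ((2:ℝ) ^ b - ((m : ℝ) - (r : ℝ))) - gam z r := by
              rw [hrec, hsign, hGm, hpowzb]
              ring
            -- key divisibility bound : m - r + 2^(z+1) ≤ 2^b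
            have hd : m - r + 2 ^ (z + 1) ≤ 2 ^ b := by
              have hdm : (2:ℕ) ^ (z+1) ∣ (m - r) := by
                have h5 := Nat.eq_sub_of_add_eq (Nat.div_add_mod m (2 ^ (z+1)))
                rw [hrm] at h5
                exact ⟨m / 2 ^ (z+1), h5.symm⟩
              obtain ⟨c, hc⟩ := hdm
              obtain ⟨E, hE⟩ := hdvd
              have hcE : c < E := by
                have : 2 ^ (z+1) * c < 2 ^ (z+1) * E := by
                  rw [← hc, ← hE]; omega
                exact lt_of_mul_lt_mul_left this (Nat.zero_le _)
              calc m - r + 2 ^ (z+1) = 2 ^ (z+1) * (c + 1) := by rw [hc]; ring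
                _ ≤ 2 ^ (z+1) * E := Nat.mul_le_mul_left _ hcE
                _ = 2 ^ b := hE.symm
            have hdR : (2:ℝ)^(z+1) ≤ (2:ℝ) ^ b - ((m : ℝ) - (r : ℝ)) := by
              have h1' : ((m - r : ℕ) : ℝ) = (m : ℝ) - (r : ℝ) := by
                push_cast [Nat.cast_sub hrmn]; ring
              have h2' : ((m - r : ℕ) : ℝ) + ((2^(z+1) : ℕ) : ℝ) ≤ ((2^b : ℕ) : ℝ) := by
                exact_mod_cast hd
              push_cast at h2' ⊢
              linarith [h1', h2']
            have hGge : (2:ℝ) ^ z * (2:ℝ) ^ z - gam z r ≤ Gsum n x := by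
              rw [hG]
              have : (2:ℝ) ^ z / 2 * (2:ℝ)^(z+1) = (2:ℝ) ^ z * (2:ℝ) ^ z := by
                rw [pow_succ]; ring
              nlinarith [hdR, pow_pos (show (0:ℝ) < 2 by norm_num) z]
            have hbk : bet z r ≤ Gsum n x := le_trans (key_ineq z r hrlt) hGge
            exact le_trans hbk (le_abs_self _)
/- ### Geometric sums and block structure -/

lemma sum_Icc_two_pow (a b : ℕ) (hab : a ≤ b) :
    (∑ k ∈ Finset.Icc a b, 2 ^ k) = 2 ^ (b + 1) - 2 ^ a := by
  induction b, hab using Nat.le_induction with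
  | base =>
      rw [Finset.Icc_self, Finset.sum_singleton]
      have h : (2:ℕ)^(a+1) = 2^a+2^a := by ring
      rw [h]
      exact (Nat.add_sub_cancel (2^a) (2^a)).symm
  | succ b hab ih =>
      rw [Finset.sum_Icc_succ_top (by omega), ih]
      have h1 : (2:ℕ) ^ (b+1+1) = 2 ^ (b+1) + 2 ^ (b+1) := by ring
      have h2 : (2:ℕ) ^ a ≤ 2 ^ (b+1) := Nat.pow_le_pow_right (by norm_num) (by omega)
      rw [h1]
      generalize hP : (2:ℕ)^(b+1) = P at h2 ⊢
      generalize hQ : (2:ℕ)^a = Q at h2 ⊢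
      omega

lemma bet_final (z t R r : ℕ) (hz : t + 1 ≤ z) (hrR : r % 2 ^ (t + 2) = R)
    (hR1 : 2 ^ t ≤ R) (hR2 : R < 2 ^ (t + 1)) (hr : r < 2 ^ (z + 1)) :
    (2 : ℝ) ^ (2 * t) / 4 ≤ bet z r := by
  have hRr : R ≤ r := hrR ▸ Nat.mod_le r _
  have htt : (2:ℝ) ^ (2 * t) = (2:ℝ) ^ t * (2:ℝ) ^ t := by rw [two_mul, pow_add]
  have h1R : (1:ℝ) ≤ (2:ℝ) ^ t := one_le_pow₀ (by norm_num)
  by_cases hrz : r < 2 ^ z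
  · rw [bet, if_pos hrz]
    have hrge : (2:ℝ) ^ t ≤ (r : ℝ) := by exact_mod_cast le_trans hR1 hRr
    rw [htt]
    nlinarith [hrge, h1R]
  · push_neg at hrz
    -- here z ≥ t + 2
    have hzt2 : t + 2 ≤ z := by
      by_contra hcon
      push_neg at hcon
      have hz1 : z = t + 1 := by omega
      subst hz1
      have hpe : (2:ℕ) ^ (t+1+1) = 2 ^ (t+1) + 2 ^ (t+1) := by ring
      have hrR' : r = R := by
        rw [← hrR]
        exact (Nat.mod_eq_of_lt (by rw [hpe] at hr ⊢; omega : r < 2 ^ (t+1+1))).symm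
      have h2' : (2:ℕ) ^ (t+1) ≤ r := hrz
      generalize hP : (2:ℕ)^(t+1) = P at h2' hR2
      omega
    -- d := 2^(z+1) - r ≥ 2^(t+1) + 1
    have hdvd : (2:ℕ) ^ (t+2) ∣ 2 ^ (z+1) := pow_dvd_pow 2 (by omega)
    obtain ⟨E, hE⟩ := hdvd
    have hq := Nat.div_add_mod r (2 ^ (t+2))
    rw [hrR] at hq
    set q := r / 2 ^ (t+2) with hqdef
    have hqE : q < E := by
      have h5 : 2 ^ (t+2) * q ≤ r := by omega
      have h6 : 2 ^ (t+2) * q < 2 ^ (t+2) * E := by rw [← hE]; omega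
      exact lt_of_mul_lt_mul_left h6 (Nat.zero_le _)
    have hd : 2 ^ (t+1) + 1 + r ≤ 2 ^ (z+1) := by
      have h7 : 2 ^ (t+2) * (q + 1) ≤ 2 ^ (t+2) * E := Nat.mul_le_mul_left _ hqE
      have h8 : (2:ℕ) ^ (t+2) = 2 ^ (t+1) + 2 ^ (t+1) := by ring
      have h10 : 2 ^ (t+2) * (q+1) = 2 ^ (t+2) * q + 2 ^ (t+2) := by ring
      rw [hE]
      generalize hA : (2:ℕ) ^ (t+2) * E = A at h7 ⊢
      generalize hB : (2:ℕ) ^ (t+2) * (q+1) = B at h7 h10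
      generalize hC : (2:ℕ) ^ (t+2) * q = C at h10 hq
      generalize hS : (2:ℕ) ^ (t+2) = S at h8 h10
      generalize hT : (2:ℕ) ^ (t+1) = T at h8 hR2 ⊢
      omega
    rw [bet, if_neg (by omega)]
    have hc1 : ((2:ℝ) ^ (t+1) + 1) ≤ (2:ℝ) ^ (z+1) - (r:ℝ) := by
      have hcc : ((2 ^ (t+1) + 1 + r : ℕ) : ℝ) ≤ ((2 ^ (z+1) : ℕ) : ℝ) := Nat.cast_le.mpr hd
      push_cast at hcc
      linarith
    have hc2 : (0:ℝ) ≤ (r : ℝ) := Nat.cast_nonneg r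
    have ht1 : (2:ℝ) ^ (t+1) = 2 * (2:ℝ) ^ t := by rw [pow_succ]; ring
    rw [htt]
    nlinarith [hc1, hc2, ht1, h1R]

/- ### Relating Gsum to the Fejér kernel -/

lemma Gsum_succ (n : ℕ) (x : G) : Gsum (n + 1) x = Gsum n x + Dker (n + 1) x := by
  rw [Gsum, Gsum, Dker, Finset.sum_range_succ, Finset.sum_range_succ]
  push_cast
  have h : ∀ k ∈ Finset.range n, ((n:ℝ) + 1 - k) * walsh k x
      = ((n:ℝ) - k) * walsh k x + walsh k x := fun k _ => by ring
  rw [Finset.sum_congr rfl h, Finset.sum_add_distrib]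
  ring

lemma sum_Dker_eq_Gsum (n : ℕ) (x : G) :
    (∑ k ∈ Finset.range n, Dker (k + 1) x) = Gsum n x := by
  induction n with
  | zero => simp [Gsum]
  | succ n ih => rw [Finset.sum_range_succ, ih, Gsum_succ]
/- ### Block structure arithmetic -/

lemma chain_lemma (s : ℕ) (l t : ℕ → ℕ)
    (hblock : ∀ i, i < s → l i ≤ t i)
    (hsep : ∀ i, i + 1 < s → t (i + 1) + 2 ≤ l i)
    (j : ℕ) : ∀ i, j < i → i < s → t i + 2 ≤ l j := by
  have key : ∀ i, j + 1 ≤ i → (i < s → t i + 2 ≤ l j) := by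
    intro i hji
    induction i, hji using Nat.le_induction with
    | base => intro hi; exact hsep j hi
    | succ i hji ih =>
        intro hi
        have h1 := hsep i hi
        have h2 := hblock i (by omega)
        have h3 := ih (by omega)
        omega
  exact fun i hji hi => key i (by omega) hi

lemma tail_lt (s : ℕ) (l t : ℕ → ℕ)
    (hblock : ∀ i, i < s → l i ≤ t i)
    (hsep : ∀ i, i + 1 < s → t (i + 1) + 2 ≤ l i) :
    ∀ d i, i < s → s - i = d →
      (∑ j ∈ Finset.Ico i s, ∑ k ∈ Finset.Icc (l j) (t j), 2 ^ k) < 2 ^ (t i + 1) := by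
  intro d
  induction d using Nat.strong_induction_on with
  | _ d IH =>
  intro i hi hd
  rw [Finset.sum_eq_sum_Ico_succ_bot hi]
  have hBi : (∑ k ∈ Finset.Icc (l i) (t i), 2 ^ k) = 2 ^ (t i + 1) - 2 ^ (l i) :=
    sum_Icc_two_pow _ _ (hblock i hi)
  have hp2 : (2:ℕ) ^ (l i) ≤ 2 ^ (t i + 1) :=
    Nat.pow_le_pow_right (by norm_num) (by have := hblock i hi; omega)
  by_cases hi1 : i + 1 < s
  · have htail := IH (s - (i + 1)) (by omega) (i + 1) hi1 rfl
    have hmono : (2:ℕ) ^ (t (i+1) + 1) * 2 ≤ 2 ^ (l i) := by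
      have h5 : (2:ℕ) ^ (t (i+1) + 1 + 1) ≤ 2 ^ (l i) :=
        Nat.pow_le_pow_right (by norm_num) (by have := hsep i hi1; omega)
      have h6 : (2:ℕ) ^ (t (i+1) + 1 + 1) = 2 ^ (t (i+1) + 1) * 2 := by ring
      omega
    rw [hBi]
    generalize hP1 : (2:ℕ) ^ (t i + 1) = P1 at hp2 ⊢
    generalize hP2 : (2:ℕ) ^ (l i) = P2 at hp2 hmono ⊢
    generalize hP3 : (2:ℕ) ^ (t (i+1) + 1) = P3 at htail hmono
    omega
  · have hempty : Finset.Ico (i+1) s = ∅ := by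
      rw [Finset.Ico_eq_empty_iff]
      omega
    rw [hempty, Finset.sum_empty, add_zero, hBi]
    have hone : (1:ℕ) ≤ 2 ^ (l i) := Nat.one_le_two_pow
    generalize hP1 : (2:ℕ) ^ (t i + 1) = P1 at hp2 ⊢
    generalize hP2 : (2:ℕ) ^ (l i) = P2 at hp2 hone ⊢
    omega

lemma N_mod_eq (s : ℕ) (l t : ℕ → ℕ)
    (hblock : ∀ i, i < s → l i ≤ t i)
    (hsep : ∀ i, i + 1 < s → t (i + 1) + 2 ≤ l i)
    (N : ℕ) (hN : N = ∑ i ∈ Finset.range s, ∑ k ∈ Finset.Icc (l i) (t i), 2 ^ k)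
    (i : ℕ) (hi : i < s) :
    N % 2 ^ (t i + 2) = (∑ j ∈ Finset.Ico i s, ∑ k ∈ Finset.Icc (l j) (t j), 2 ^ k)
    ∧ 2 ^ (t i) ≤ (∑ j ∈ Finset.Ico i s, ∑ k ∈ Finset.Icc (l j) (t j), 2 ^ k)
    ∧ (∑ j ∈ Finset.Ico i s, ∑ k ∈ Finset.Icc (l j) (t j), 2 ^ k) < 2 ^ (t i + 1) := by
  set L := ∑ j ∈ Finset.Ico i s, ∑ k ∈ Finset.Icc (l j) (t j), 2 ^ k with hL
  have hLlt : L < 2 ^ (t i + 1) := tail_lt s l t hblock hsep (s - i) i hi rfl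
  have hLge : 2 ^ (t i) ≤ L := by
    have h1 : (2:ℕ) ^ (t i) ≤ ∑ k ∈ Finset.Icc (l i) (t i), 2 ^ k := by
      apply Finset.single_le_sum (f := fun k => (2:ℕ) ^ k)
      · intro k _; exact Nat.zero_le _
      · rw [Finset.mem_Icc]; exact ⟨hblock i hi, le_rfl⟩
    have h2 : (∑ k ∈ Finset.Icc (l i) (t i), 2 ^ k) ≤ L := by
      apply Finset.single_le_sum (f := fun j => ∑ k ∈ Finset.Icc (l j) (t j), (2:ℕ) ^ k)
      · intro j _; exact Nat.zero_le _
      · rw [Finset.mem_Ico]; exact ⟨le_rfl, hi⟩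
    omega
  have hsplit : N = (∑ j ∈ Finset.Ico 0 i, ∑ k ∈ Finset.Icc (l j) (t j), 2 ^ k) + L := by
    rw [hN, Finset.range_eq_Ico,
      ← Finset.sum_Ico_consecutive _ (Nat.zero_le i) (le_of_lt hi)]
  have hdvd : (2:ℕ) ^ (t i + 2) ∣ ∑ j ∈ Finset.Ico 0 i, ∑ k ∈ Finset.Icc (l j) (t j), 2 ^ k := by
    apply Finset.dvd_sum
    intro j hj
    apply Finset.dvd_sum
    intro k hk
    rw [Finset.mem_Ico] at hj
    rw [Finset.mem_Icc] at hk
    apply pow_dvd_pow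
    have := chain_lemma s l t hblock hsep j i hj.2 hi
    omega
  obtain ⟨c, hc⟩ := hdvd
  have hmod : N % 2 ^ (t i + 2) = L % 2 ^ (t i + 2) := by
    rw [hsplit, hc, Nat.mul_add_mod]
  have hLP : L < 2 ^ (t i + 2) := by
    have : (2:ℕ) ^ (t i + 1) ≤ 2 ^ (t i + 2) := Nat.pow_le_pow_right (by norm_num) (by omega)
    omega
  rw [hmod, Nat.mod_eq_of_lt hLP]
  exact ⟨rfl, hLge, hLlt⟩

/-- lower bound `n |K_n| ≥ 2^{2 t_i - 2}` on `E_{t_i}`. -/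
theorem fejer_lower_bound_t (s : ℕ) (l t : ℕ → ℕ)
    (hblock : ∀ i, i < s → l i ≤ t i)
    (hsep : ∀ i, i + 1 < s → t (i + 1) + 2 ≤ l i)
    (N : ℕ) (hN : N = ∑ i ∈ Finset.range s, ∑ k ∈ Finset.Icc (l i) (t i), 2 ^ k) :
    ∀ i, i < s →
      ∀ x ∈ cyl (t i + 1) (e (t i + 1) + e (t i + 2)),
        (N : ℝ) * |Kker N x| ≥ (2 : ℝ) ^ (2 * t i) / 2 ^ 2 := by
  intro i hi x hx
  have hxlow : ∀ j, j < t i + 1 → x j = 0 := by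
    intro j hj
    have h1 : x j = (e (t i + 1) + e (t i + 2)) j := hx j hj
    rw [h1, Pi.add_apply, e, e, if_neg (by omega), if_neg (by omega)]
    simp
  obtain ⟨hmod, hL1, hL2⟩ := N_mod_eq s l t hblock hsep N hN i hi
  set L := ∑ j ∈ Finset.Ico i s, ∑ k ∈ Finset.Icc (l j) (t j), 2 ^ k with hLdef
  have hLN : L ≤ N := hmod ▸ Nat.mod_le N _
  have hN0 : N ≠ 0 := by
    have : (1:ℕ) ≤ 2 ^ (t i) := Nat.one_le_two_pow
    omega
  have hKG : (N : ℝ) * Kker N x = Gsum N x := by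
    rw [Kker, sum_Dker_eq_Gsum]
    have : (N:ℝ) ≠ 0 := Nat.cast_ne_zero.mpr hN0
    field_simp
  have habs : (N : ℝ) * |Kker N x| = |Gsum N x| := by
    rw [← hKG, abs_mul, abs_of_nonneg (a := (N:ℝ)) (Nat.cast_nonneg N)]
  rw [ge_iff_le, habs]
  have h4 : ((2:ℝ) ^ 2) = 4 := by norm_num
  rw [h4]
  by_cases hex : ∃ j, x j ≠ 0
  · set z := Nat.find hex with hzdef
    have hz1 : x z ≠ 0 := Nat.find_spec hex
    have hz0 : ∀ j < z, x j = 0 := fun j hj => not_not.mp (Nat.find_min hex hj)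
    have hzt : t i + 1 ≤ z := by
      by_contra hcon
      push_neg at hcon
      exact hz1 (hxlow z (by omega))
    have hmain := (master x z hz1 hz0 N).2
    have hpos : (0:ℕ) < 2 ^ (z + 1) := Nat.pow_pos (by norm_num)
    have hrR : (N % 2 ^ (z + 1)) % 2 ^ (t i + 2) = L := by
      rw [Nat.mod_mod_of_dvd N (pow_dvd_pow 2 (by omega : t i + 2 ≤ z + 1))]
      exact hmod
    have hfin := bet_final z (t i) L (N % 2 ^ (z + 1)) hzt hrR hL1 hL2 (Nat.mod_lt _ hpos)
    linarith [hmain, hfin]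
  · push_neg at hex
    have hG := Gsum_of_zero N N x (fun j _ => hex j) (Nat.lt_two_pow_self (n := N)).le
    rw [hG]
    have hcast : (2:ℝ) ^ (t i) ≤ (N : ℝ) := by
      exact_mod_cast le_trans hL1 hLN
    have htt : (2:ℝ) ^ (2 * t i) = (2:ℝ) ^ (t i) * (2:ℝ) ^ (t i) := by rw [two_mul, pow_add]
    rw [htt]
    have h0 : (0:ℝ) ≤ (N:ℝ) := Nat.cast_nonneg N
    rw [abs_of_nonneg (by positivity)]
    nlinarith [mul_le_mul hcast hcast (by positivity) h0]
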